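/- Let G be a finite simple connected graph on vertex set V with |V| = n ≥ 2. Then 1/(n−1) ≤ ρ(G) ≤ 1. -/

import Mathlib

open Finset

variable {V : Type*} [Fintype V] [DecidableEq V]

/-- The directed representatives of the cut `E(S, S̄)`: ordered pairs `(u, v)` with
`u ∈ S`, `v ∉ S` and `{u,v}` an edge of `G`.  Each edge of the cut corresponds to
exactly one such pair. -/
def cutPairs (G : SimpleGraph V) [DecidableRel G.Adj] (S : Finset V) : Finset (V × V) :=
  Finset.univ.filter fun p => p.1 ∈ S ∧ p.2 ∉ S ∧ G.Adj p.1 p.2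

/-- The volume of a set of vertices: the sum of the degrees of its elements. -/
def vol (G : SimpleGraph V) [DecidableRel G.Adj] (S : Finset V) : ℕ :=
  ∑ u ∈ S, G.degree u

/-- The conductance `Φ(G) = min_{∅ ≠ S ⊊ V} |E(S,S̄)| / min(vol S, vol S̄)`. -/
noncomputable def conductance (G : SimpleGraph V) [DecidableRel G.Adj] : ℝ :=
  ⨅ S : {S : Finset V // S.Nonempty ∧ S ≠ Finset.univ},
    ((cutPairs G S.1).card : ℝ) / min (vol G S.1 : ℝ) (vol G (S.1)ᶜ : ℝ)

/-- The average degree `d̄(S) = vol(S)/|S|`. -/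
noncomputable def avgDeg (G : SimpleGraph V) [DecidableRel G.Adj] (S : Finset V) : ℝ :=
  (vol G S : ℝ) / (S.card : ℝ)

/-- The diligence of the cut `E(S,S̄)`:
`ρ(S) = min_{{u,v} ∈ E(S,S̄)} max(d̄(S)/d_u, d̄(S)/d_v)`. -/
noncomputable def cutDiligence (G : SimpleGraph V) [DecidableRel G.Adj] (S : Finset V) : ℝ :=
  ⨅ p : cutPairs G S,
    max (avgDeg G S / (G.degree (p : V × V).1 : ℝ)) (avgDeg G S / (G.degree (p : V × V).2 : ℝ))

/-- The diligence of `G`: `ρ(G) = min_{S, 0 < vol S ≤ vol G / 2} ρ(S)`. -/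
noncomputable def diligence (G : SimpleGraph V) [DecidableRel G.Adj] : ℝ :=
  ⨅ S : {S : Finset V // 0 < vol G S ∧ 2 * vol G S ≤ vol G Finset.univ},
    cutDiligence G S.1

/-- The absolute diligence of `G`: `ρ̄(G) = min_{{u,v} ∈ E} max(1/d_u, 1/d_v)`. -/
noncomputable def absDiligence (G : SimpleGraph V) [DecidableRel G.Adj] : ℝ :=
  ⨅ p : {p : V × V // G.Adj p.1 p.2},
    max (1 / (G.degree (p : V × V).1 : ℝ)) (1 / (G.degree (p : V × V).2 : ℝ))

/-!
For `S` with `0 < vol S ≤ vol G / 2`, each cut edge `(u, v)` contributes at least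
`d̄(S) / d_u ≥ 1 / (n - 1)`: in a connected graph on `n ≥ 2` vertices all degrees are positive,
so `d̄(S) ≥ 1`, and `d_u ≤ n - 1`. Connectivity also makes the cut nonempty, so that `ρ(S)` is
not the junk value `0` of an infimum over the empty set. For the upper bound, the singleton of a
vertex `u` of minimum degree is admissible, and an edge from `u` to a neighbour `w` gives
`max (d_u / d_u) (d_u / d_w) = 1`.
-/

section

variable {G : SimpleGraph V} [DecidableRel G.Adj]

theorem vol_add_vol_compl (S : Finset V) : vol G S + vol G Sᶜ = vol G univ :=
  sum_add_sum_compl S _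

omit [DecidableEq V] in
theorem nonempty_of_vol_pos {S : Finset V} (h : 0 < vol G S) : S.Nonempty :=
  nonempty_of_sum_ne_zero h.ne'

omit [DecidableEq V] in
theorem card_le_vol {S : Finset V} (h : ∀ v ∈ S, 0 < G.degree v) : #S ≤ vol G S := by
  simpa [vol] using card_nsmul_le_sum S (fun v => G.degree v) 1 h

omit [DecidableEq V] in
theorem one_le_avgDeg {S : Finset V} (hS : S.Nonempty) (h : ∀ v ∈ S, 0 < G.degree v) :
    1 ≤ avgDeg G S := by
  rw [avgDeg, one_le_div (by simpa using hS)]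
  exact_mod_cast card_le_vol h

theorem cutPairs_nonempty (hG : G.Connected) {S : Finset V} {u v : V} (hu : u ∈ S) (hv : v ∉ S) :
    (cutPairs G S).Nonempty := by
  obtain ⟨d, -, hd₁, hd₂⟩ := (hG u v).some.exists_boundary_dart S hu hv
  exact ⟨d.toProd, by simp_all [cutPairs, d.adj]⟩

omit [DecidableEq V] in
theorem avgDeg_nonneg (S : Finset V) : 0 ≤ avgDeg G S :=
  div_nonneg (Nat.cast_nonneg _) (Nat.cast_nonneg _)

theorem cutDiligence_nonneg (S : Finset V) : 0 ≤ cutDiligence G S :=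
  Real.iInf_nonneg fun _ => le_max_of_le_left (div_nonneg (avgDeg_nonneg S) (Nat.cast_nonneg _))

theorem cutDiligence_le {S : Finset V} {p : V × V} (hp : p ∈ cutPairs G S) :
    cutDiligence G S ≤ max (avgDeg G S / G.degree p.1) (avgDeg G S / G.degree p.2) := by
  refine ciInf_le ⟨0, ?_⟩ (⟨p, hp⟩ : cutPairs G S)
  rintro _ ⟨q, rfl⟩
  exact le_max_of_le_left (div_nonneg (avgDeg_nonneg S) (Nat.cast_nonneg _))

theorem one_div_card_sub_one_le_cutDiligence (hG : G.Connected) {S : Finset V} {u v : V}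
    (hu : u ∈ S) (hv : v ∉ S) : 1 / ((Fintype.card V : ℝ) - 1) ≤ cutDiligence G S := by
  have : Nontrivial V := ⟨⟨u, v, by rintro rfl; exact hv hu⟩⟩
  have hdeg (x : V) : 0 < G.degree x := hG.preconnected.degree_pos_of_nontrivial x
  have havg : 1 ≤ avgDeg G S := one_le_avgDeg ⟨u, hu⟩ fun x _ => hdeg x
  have : Nonempty (cutPairs G S) := (cutPairs_nonempty hG hu hv).to_subtype
  refine le_ciInf fun p => le_max_of_le_left (div_le_div₀ (by positivity) havg ?_ ?_)
  · exact_mod_cast hdeg _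
  · have := G.degree_lt_card_verts (p : V × V).1
    rw [le_sub_iff_add_le]
    exact_mod_cast this

theorem compl_nonempty_of_two_mul_vol_le {S : Finset V} (h₀ : 0 < vol G S)
    (h₂ : 2 * vol G S ≤ vol G univ) : Sᶜ.Nonempty :=
  nonempty_of_vol_pos (G := G) (by have := vol_add_vol_compl (G := G) S; omega)

theorem two_mul_vol_singleton_le {u w : V} (huw : u ≠ w) (hdeg : G.degree u ≤ G.degree w) :
    2 * vol G {u} ≤ vol G univ := calc
  2 * vol G {u} ≤ vol G {u, w} := by simp [vol, sum_pair huw]; omega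
  _ ≤ vol G univ := sum_le_sum_of_subset (subset_univ _)

theorem cutDiligence_singleton_le_one {u w : V} (hadj : G.Adj u w)
    (hdeg : G.degree u ≤ G.degree w) : cutDiligence G {u} ≤ 1 := by
  have hu : (0 : ℝ) < G.degree u := by exact_mod_cast hadj.degree_pos_left
  have hp : (u, w) ∈ cutPairs G {u} := by simp [cutPairs, hadj, hadj.ne.symm]
  refine (cutDiligence_le hp).trans (max_le ?_ ?_) <;>
    simp only [avgDeg, vol, sum_singleton, card_singleton, Nat.cast_one, div_one]
  · exact (div_self hu.ne').le
  · exact div_le_one_of_le₀ (by exact_mod_cast hdeg) (by positivity)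

theorem le_diligence {c : ℝ} (hne : ∃ S, 0 < vol G S ∧ 2 * vol G S ≤ vol G univ)
    (h : ∀ S, 0 < vol G S → 2 * vol G S ≤ vol G univ → c ≤ cutDiligence G S) :
    c ≤ diligence G := by
  obtain ⟨S, hS⟩ := hne
  have : Nonempty {S : Finset V // 0 < vol G S ∧ 2 * vol G S ≤ vol G univ} := ⟨⟨S, hS⟩⟩
  exact le_ciInf fun S => h S.1 S.2.1 S.2.2

theorem diligence_le_cutDiligence {S : Finset V} (h₀ : 0 < vol G S)
    (h₂ : 2 * vol G S ≤ vol G univ) : diligence G ≤ cutDiligence G S := by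
  refine ciInf_le ⟨0, ?_⟩ (⟨S, h₀, h₂⟩ : {S : Finset V // 0 < vol G S ∧ 2 * vol G S ≤ vol G univ})
  rintro _ ⟨T, rfl⟩
  exact cutDiligence_nonneg _

end

/-- For a finite simple connected graph `G` on `n ≥ 2` vertices,
`1/(n−1) ≤ ρ(G) ≤ 1`. -/
theorem stmt4 {V : Type*} [Fintype V] [DecidableEq V]
    (G : SimpleGraph V) [DecidableRel G.Adj]
    (hn : 2 ≤ Fintype.card V) (hconn : G.Connected) :
    1 / ((Fintype.card V : ℝ) - 1) ≤ diligence G ∧ diligence G ≤ 1 := by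
  have : Nontrivial V := Fintype.one_lt_card_iff_nontrivial.mp hn
  obtain ⟨u, hu⟩ := G.exists_minimal_degree_vertex
  obtain ⟨w, huw⟩ :=
    (G.degree_pos_iff_exists_adj u).mp (hconn.preconnected.degree_pos_of_nontrivial u)
  have hmin : G.degree u ≤ G.degree w := hu ▸ G.minDegree_le_degree w
  have hadm : 0 < vol G {u} ∧ 2 * vol G {u} ≤ vol G univ :=
    ⟨by simpa [vol] using huw.degree_pos_left, two_mul_vol_singleton_le huw.ne hmin⟩
  refine ⟨le_diligence ⟨_, hadm⟩ fun S h₀ h₂ => ?_,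
    (diligence_le_cutDiligence hadm.1 hadm.2).trans (cutDiligence_singleton_le_one huw hmin)⟩
  obtain ⟨x, hx⟩ := nonempty_of_vol_pos h₀
  obtain ⟨y, hy⟩ := compl_nonempty_of_two_mul_vol_le h₀ h₂
  exact one_div_card_sub_one_le_cutDiligence hconn hx (mem_compl.mp hy)
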